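/- Let D = (D, H, V) be a domino system. Consider the SHIN⁺ role hierarchy R⁺ generated by role names X₁, X₂, Y₁, Y₂ and transitive role names S₁₁, S₁₂, S₂₁, S₂₂ with axioms Xᵢ ⊑ S_{ij} and Yⱼ ⊑ S_{ij} for i, j ∈ {1,2}, and the terminology T consisting of: the grid axioms A ⊑ ¬B ⊓ ¬C ⊓ ¬E ⊓ ∃X₁.B ⊓ ∃Y₁.C ⊓ (≤ 3 S₁₁), B ⊑ ¬A ⊓ ¬C ⊓ ¬E ⊓ ∃X₂.A ⊓ ∃Y₁.E ⊓ (≤ 3 S₂₁), C ⊑ ¬A ⊓ ¬B ⊓ ¬E ⊓ ∃X₁.E ⊓ ∃Y₂.A ⊓ (≤ 3 S₁₂), E ⊑ ¬A ⊓ ¬B ⊓ ¬C ⊓ ∃X₂.C ⊓ ∃Y₂.B ⊓ (≤ 3 S₂₂) for concept names A, B, C, E; the tiling axioms A ⊔ B ⊔ C ⊔ E ⊑ ⊔_{d ∈ D} C_d with fresh concept names C_d, C_d ⊑ ¬C_{d'} for d ≠ d', and the local compatibility axioms C_d ⊑ ∀X₁.(⊔_{(d,d') ∈ H} C_{d'})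 ⊓ ∀X₂.(⊔_{(d,d') ∈ H} C_{d'}) ⊓ ∀Y₁.(⊔_{(d,d') ∈ V} C_{d'}) ⊓ ∀Y₂.(⊔_{(d,d') ∈ V} C_{d'}) for each d ∈ D. Then the concept A is satisfiable with respect to T and R⁺ if and only if D admits a tiling of ℕ × ℕ. -/

import Mathlib

/-- SHIQ-roles: role names (indexed by ℕ) and their inverses. -/
inductive Role where
  | atom : ℕ → Role
  | inv  : ℕ → Role
deriving DecidableEq

/-- The function `Inv` on roles: `Inv(R) = R⁻`, `Inv(R⁻) = R`. -/
def Role.Inv : Role → Role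
  | .atom r => .inv r
  | .inv r  => .atom r

/-- The underlying role name of a (possibly inverse) role. -/
def Role.name : Role → ℕ
  | .atom r => r
  | .inv r  => r

/-- Concepts of the SHIQ family (with ⊤ and ⊥ for convenience). -/
inductive DLConcept where
  | top : DLConcept
  | bot : DLConcept
  | atom : ℕ → DLConcept
  | neg : DLConcept → DLConcept
  | and : DLConcept → DLConcept → DLConcept
  | or : DLConcept → DLConcept → DLConcept
  | all : Role → DLConcept → DLConcept
  | ex : Role → DLConcept → DLConcept
  | atleast : ℕ → Role → DLConcept → DLConcept
  | atmost : ℕ → Role → DLConcept → DLConcept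
deriving DecidableEq

/-- An interpretation: a (nonempty) domain, a valuation of concept names and
    of role names. -/
structure Interp where
  Dom : Type
  dom_nonempty : Nonempty Dom
  cI : ℕ → Set Dom
  rI : ℕ → Dom → Dom → Prop

/-- Semantics of (possibly inverse) roles. -/
def Interp.rSem (I : Interp) : Role → I.Dom → I.Dom → Prop
  | .atom r => I.rI r
  | .inv r  => fun x y => I.rI r y x

/-- Semantics of concepts; number restrictions are interpreted by counting
    role successors (via cardinalities, so that infinite sets are handled
    correctly). -/
def Interp.cSem (I : Interp) : DLConcept → Set I.Dom
  | .top => Set.univ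
  | .bot => ∅
  | .atom a => I.cI a
  | .neg C => (I.cSem C)ᶜ
  | .and C D => I.cSem C ∩ I.cSem D
  | .or C D => I.cSem C ∪ I.cSem D
  | .all R C => {x | ∀ y, I.rSem R x y → y ∈ I.cSem C}
  | .ex R C => {x | ∃ y, I.rSem R x y ∧ y ∈ I.cSem C}
  | .atleast n R C => {x | (n : Cardinal) ≤ Cardinal.mk {y // I.rSem R x y ∧ y ∈ I.cSem C}}
  | .atmost n R C => {x | Cardinal.mk {y // I.rSem R x y ∧ y ∈ I.cSem C} ≤ (n : Cardinal)}

/-- `I.Good Rp`: the interpretation interprets every transitive role name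
    (member of `Rp`) by a transitive relation. -/
def Interp.Good (I : Interp) (Rp : Set ℕ) : Prop :=
  ∀ r ∈ Rp, Transitive (I.rI r)

/-- The role hierarchy ⊑* generated by a finite set of role inclusion axioms:
    inverses are added and the transitive-reflexive closure is taken. -/
def SubRole (RIA : List (Role × Role)) : Role → Role → Prop :=
  Relation.ReflTransGen (fun R S => (R, S) ∈ RIA ∨ (R.Inv, S.Inv) ∈ RIA)

/-- `I ⊨ R⁺`: the interpretation satisfies the role hierarchy. -/
def Interp.ModelsRH (I : Interp) (RIA : List (Role × Role)) : Prop :=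
  ∀ R S, SubRole RIA R S → ∀ x y, I.rSem R x y → I.rSem S x y

/-- `Trans(R)`: a (possibly inverse) role is transitive iff its name is in `Rp`. -/
def RTrans (Rp : Set ℕ) : Role → Prop
  | .atom r => r ∈ Rp
  | .inv r  => r ∈ Rp

/-- A role is simple iff it is neither transitive nor has a transitive sub-role. -/
def SimpleRole (Rp : Set ℕ) (RIA : List (Role × Role)) (R : Role) : Prop :=
  ∀ S, SubRole RIA S R → ¬ RTrans Rp S

/-- SHIQ-concepts: number restrictions occur only on simple roles. -/
def DLConcept.IsSHIQ (Rp : Set ℕ) (RIA : List (Role × Role)) : DLConcept → Prop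
  | .top | .bot | .atom _ => True
  | .neg C => C.IsSHIQ Rp RIA
  | .and C D | .or C D => C.IsSHIQ Rp RIA ∧ D.IsSHIQ Rp RIA
  | .all _ C | .ex _ C => C.IsSHIQ Rp RIA
  | .atleast _ R C | .atmost _ R C => SimpleRole Rp RIA R ∧ C.IsSHIQ Rp RIA

/-- Satisfiability of a concept w.r.t. a role hierarchy. -/
def Satisfiable (Rp : Set ℕ) (RIA : List (Role × Role)) (C : DLConcept) : Prop :=
  ∃ I : Interp, I.Good Rp ∧ I.ModelsRH RIA ∧ (I.cSem C).Nonempty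

/-- Subsumption of concepts w.r.t. a role hierarchy. -/
def Subsumes (Rp : Set ℕ) (RIA : List (Role × Role)) (C D : DLConcept) : Prop :=
  ∀ I : Interp, I.Good Rp → I.ModelsRH RIA → I.cSem C ⊆ I.cSem D
/-- A terminology: a finite list of general concept inclusion axioms `C ⊑ D`. -/
abbrev Terminology := List (DLConcept × DLConcept)

/-- `I` is a model of the terminology `T`. -/
def Interp.ModelsT (I : Interp) (T : Terminology) : Prop :=
  ∀ p ∈ T, I.cSem p.1 ⊆ I.cSem p.2

/-- Satisfiability w.r.t. a terminology and a role hierarchy. -/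
def SatisfiableT (Rp : Set ℕ) (RIA : List (Role × Role)) (T : Terminology)
    (C : DLConcept) : Prop :=
  ∃ I : Interp, I.Good Rp ∧ I.ModelsRH RIA ∧ I.ModelsT T ∧ (I.cSem C).Nonempty

/-- Subsumption w.r.t. a terminology and a role hierarchy. -/
def SubsumesT (Rp : Set ℕ) (RIA : List (Role × Role)) (T : Terminology)
    (C D : DLConcept) : Prop :=
  ∀ I : Interp, I.Good Rp → I.ModelsRH RIA → I.ModelsT T → I.cSem C ⊆ I.cSem D

/-- `C_T`: the conjunction of all `¬Cᵢ ⊔ Dᵢ` for `Cᵢ ⊑ Dᵢ ∈ T`. -/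
def CT (T : Terminology) : DLConcept :=
  T.foldr (fun p acc => DLConcept.and (DLConcept.or (DLConcept.neg p.1) p.2) acc) DLConcept.top

/-- The role names occurring in a concept. -/
def DLConcept.roleNames : DLConcept → Finset ℕ
  | .top | .bot | .atom _ => ∅
  | .neg C => C.roleNames
  | .and C D | .or C D => C.roleNames ∪ D.roleNames
  | .all R C | .ex R C => insert R.name C.roleNames
  | .atleast _ R C | .atmost _ R C => insert R.name C.roleNames

/-- The role names occurring in a terminology. -/
def termRoleNames (T : Terminology) : Finset ℕ :=
  T.foldr (fun p acc => p.1.roleNames ∪ p.2.roleNames ∪ acc) ∅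

/-- The role names occurring in a set of role inclusion axioms. -/
def riaRoleNames (RIA : List (Role × Role)) : Finset ℕ :=
  RIA.foldr (fun p acc => insert p.1.name (insert p.2.name acc)) ∅

/-- `R_U`: the given role inclusion axioms extended with `R ⊑ U` and
    `Inv(R) ⊑ U` for every role (name) `r` in `names`. -/
def addU (RIA : List (Role × Role)) (names : Finset ℕ) (u : ℕ) : List (Role × Role) :=
  RIA ++ (names.sort (· ≤ ·)).map (fun r => (Role.atom r, Role.atom u))
      ++ (names.sort (· ≤ ·)).map (fun r => (Role.inv r, Role.atom u))

/-- Disjunction of a list of concepts (`⊥` for the empty list). -/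
def bigOr (l : List DLConcept) : DLConcept := l.foldr DLConcept.or DLConcept.bot

/-- Conjunction of a list of concepts (`⊤` for the empty list). -/
def bigAnd (l : List DLConcept) : DLConcept := l.foldr DLConcept.and DLConcept.top

/-! A model of `A` contains an infinite grid. Following the `X`- and `Y`-successors demanded
by the grid axioms from an instance of `A`, the concepts `A, B, C, E` alternate with the
parities of the two coordinates. Each square closes up: if the `X`-successor of the
`Y`-successor of a cell `w` differed from the `Y`-successor of its `X`-successor, then by
transitivity of `S_{ij}` and `X_i, Y_j ⊑ S_{ij}` the cell `w` would have four distinct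
`S_{ij}`-successors (the four are distinct because they lie in different concepts),
contradicting `(≤ 3 S_{ij})`. The tile concepts along this grid form a tiling. Conversely,
a tiling is turned into a model on `ℕ × ℕ`. -/

@[simp]
lemma mem_cSem_bigOr {I : Interp} {l : List DLConcept} {x : I.Dom} :
    x ∈ I.cSem (bigOr l) ↔ ∃ C ∈ l, x ∈ I.cSem C := by
  induction l with
  | nil => simp [bigOr, Interp.cSem]
  | cons C l ih => simp_all [bigOr, Interp.cSem]

@[simp]
lemma mem_cSem_bigAnd {I : Interp} {l : List DLConcept} {x : I.Dom} :
    x ∈ I.cSem (bigAnd l) ↔ ∀ C ∈ l, x ∈ I.cSem C := by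
  induction l with
  | nil => simp [bigAnd, Interp.cSem]
  | cons C l ih => simp_all [bigAnd, Interp.cSem]

lemma Interp.rSem_inv (I : Interp) (R : Role) (x y : I.Dom) :
    I.rSem R.Inv x y ↔ I.rSem R y x := by
  cases R <;> rfl

theorem Interp.modelsRH_iff (I : Interp) (RIA : List (Role × Role)) :
    I.ModelsRH RIA ↔ ∀ p ∈ RIA, ∀ x y, I.rSem p.1 x y → I.rSem p.2 x y := by
  refine ⟨fun h p hp => h p.1 p.2 (.single (.inl hp)), fun h R S hRS => ?_⟩
  induction hRS with
  | refl => exact fun _ _ => id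
  | tail _ hstep ih =>
    rcases hstep with hstep | hstep
    · exact fun x y hxy => h _ hstep x y (ih x y hxy)
    · intro x y hxy
      rw [← Interp.rSem_inv]
      exact h _ hstep y x ((Interp.rSem_inv ..).2 (ih x y hxy))

lemma Interp.modelsT_append {I : Interp} {T₁ T₂ : Terminology} :
    I.ModelsT (T₁ ++ T₂) ↔ I.ModelsT T₁ ∧ I.ModelsT T₂ := by
  simp [Interp.ModelsT, or_imp, forall_and]

lemma length_le_of_forall_mem {α : Type*} {P : α → Prop} {n : ℕ}
    (hP : Cardinal.mk {u // P u} ≤ n) {l : List α} (hl : l.Nodup) (hlP : ∀ u ∈ l, P u) :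
    l.length ≤ n := by
  classical
  have hsub : (↑l.toFinset : Set α) ⊆ {u | P u} := fun u hu => hlP u (by simpa using hu)
  have := (Cardinal.mk_le_mk_of_subset hsub).trans hP
  rwa [Finset.coe_sort_coe, Cardinal.mk_coe_finset, List.toFinset_card_of_nodup hl,
    Nat.cast_le] at this

structure GridFrame {α : Type*} (K : Bool → Bool → Set α) (X Y : Bool → α → α → Prop)
    (S : Bool → Bool → α → α → Prop) : Prop where
  eq_of_mem : ∀ {w i j i' j'}, w ∈ K i j → w ∈ K i' j' → i = i' ∧ j = j'
  exists_x : ∀ {w i j}, w ∈ K i j → ∃ u, X i w u ∧ u ∈ K (!i) j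
  exists_y : ∀ {w i j}, w ∈ K i j → ∃ v, Y j w v ∧ v ∈ K i (!j)
  x_le : ∀ i j, X i ≤ S i j
  y_le : ∀ i j, Y j ≤ S i j
  transitive : ∀ i j, Transitive (S i j)
  card_le : ∀ {w i j}, w ∈ K i j → Cardinal.mk {u // S i j w u} ≤ 3

namespace GridFrame

variable {α : Type*} {K : Bool → Bool → Set α} {X Y : Bool → α → α → Prop}
  {S : Bool → Bool → α → α → Prop}

lemma exists_fun_of_forall_mem (hG : GridFrame K X Y S) {P : Bool → Bool → α → α → Prop}
    (h : ∀ {w i j}, w ∈ K i j → ∃ u, P i j w u) :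
    ∃ f : α → α, ∀ {w i j}, w ∈ K i j → P i j w (f w) := by
  have : ∀ w, ∃ u, ∀ i j, w ∈ K i j → P i j w u := by
    intro w
    by_cases hw : ∃ i j, w ∈ K i j
    · obtain ⟨i, j, hij⟩ := hw
      obtain ⟨u, hu⟩ := h hij
      refine ⟨u, fun i' j' h' => ?_⟩
      obtain ⟨rfl, rfl⟩ := hG.eq_of_mem hij h'
      exact hu
    · simp only [not_exists] at hw
      exact ⟨w, fun i j h => absurd h (hw i j)⟩
  choose f hf using this
  exact ⟨f, fun h => hf _ _ _ h⟩

lemma ne_of_mem_not_left (hG : GridFrame K X Y S) {w w' : α} {i j j'}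
    (hw : w ∈ K i j) (hw' : w' ∈ K (!i) j') : w ≠ w' := by
  rintro rfl
  simpa using (hG.eq_of_mem hw hw').1

lemma ne_of_mem_not_right (hG : GridFrame K X Y S) {w w' : α} {i j i'}
    (hw : w ∈ K i j) (hw' : w' ∈ K i' (!j)) : w ≠ w' := by
  rintro rfl
  simpa using (hG.eq_of_mem hw hw').2

lemma succ_comm_of_mem (hG : GridFrame K X Y S) {fX fY : α → α}
    (hfX : ∀ {w i j}, w ∈ K i j → X i w (fX w) ∧ fX w ∈ K (!i) j)
    (hfY : ∀ {w i j}, w ∈ K i j → Y j w (fY w) ∧ fY w ∈ K i (!j))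
    {w : α} {i j : Bool} (hw : w ∈ K i j) : fX (fY w) = fY (fX w) := by
  obtain ⟨hwu, hu⟩ := hfX hw
  obtain ⟨hwv, hv⟩ := hfY hw
  obtain ⟨huu', hu'⟩ := hfY hu
  obtain ⟨hvv', hv'⟩ := hfX hv
  by_contra hne
  have hS : ∀ z ∈ [fX w, fY w, fY (fX w), fX (fY w)], S i j w z := by
    simp only [List.mem_cons, List.not_mem_nil, or_false]
    rintro z (rfl | rfl | rfl | rfl)
    · exact hG.x_le i j _ _ hwu
    · exact hG.y_le i j _ _ hwv
    · exact hG.transitive i j (hG.x_le i j _ _ hwu) (hG.y_le i j _ _ huu')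
    · exact hG.transitive i j (hG.y_le i j _ _ hwv) (hG.x_le i j _ _ hvv')
  have hnodup : [fX w, fY w, fY (fX w), fX (fY w)].Nodup := by
    simp only [List.nodup_cons, List.mem_cons, List.not_mem_nil, or_false, not_or,
      List.nodup_nil, and_true]
    exact ⟨⟨hG.ne_of_mem_not_right hu hv, hG.ne_of_mem_not_right hu hu',
      hG.ne_of_mem_not_right hu hv'⟩, ⟨hG.ne_of_mem_not_left hv hu',
      hG.ne_of_mem_not_left hv hv'⟩, Ne.symm hne, not_false⟩
  have := length_le_of_forall_mem (hG.card_le hw) hnodup hS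
  simp at this

theorem exists_grid (hG : GridFrame K X Y S) {w : α} (hw : w ∈ K false false) :
    ∃ g : ℕ → ℕ → α, ∀ m n, g m n ∈ K m.bodd n.bodd ∧
      X m.bodd (g m n) (g (m + 1) n) ∧ Y n.bodd (g m n) (g m (n + 1)) := by
  obtain ⟨fX, hfX⟩ :=
    hG.exists_fun_of_forall_mem (P := fun i j w u => X i w u ∧ u ∈ K (!i) j) hG.exists_x
  obtain ⟨fY, hfY⟩ :=
    hG.exists_fun_of_forall_mem (P := fun i j w v => Y j w v ∧ v ∈ K i (!j)) hG.exists_y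
  have hright : ∀ m n, fX^[m + 1] (fY^[n] w) = fX (fX^[m] (fY^[n] w)) := fun m n =>
    Function.iterate_succ_apply' ..
  have hmem : ∀ m n, fX^[m] (fY^[n] w) ∈ K m.bodd n.bodd := by
    intro m n
    induction m with
    | zero =>
      induction n with
      | zero => exact hw
      | succ n ih =>
        rw [Function.iterate_zero_apply, Function.iterate_succ_apply', Nat.bodd_succ]
        exact (hfY ih).2
    | succ m ih => rw [hright, Nat.bodd_succ]; exact (hfX ih).2
  have hup : ∀ m n, fX^[m] (fY^[n + 1] w) = fY (fX^[m] (fY^[n] w)) := by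
    intro m n
    induction m with
    | zero => exact Function.iterate_succ_apply' ..
    | succ m ih => rw [hright, hright, ih, hG.succ_comm_of_mem hfX hfY (hmem m n)]
  refine ⟨fun m n => fX^[m] (fY^[n] w), fun m n => ⟨hmem m n, ?_, ?_⟩⟩
  · simp only [hright]; exact (hfX (hmem m n)).1
  · simp only [hup]; exact (hfY (hmem m n)).1

end GridFrame

theorem exists_tiling_of_grid {α : Type*} {g : ℕ → ℕ → α} {C : ℕ → Set α} {Dset : Finset ℕ}
    {H V : Finset (ℕ × ℕ)} (hH : ∀ p ∈ H, p.2 ∈ Dset) (hV : ∀ p ∈ V, p.2 ∈ Dset)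
    (hcover : ∀ m n, ∃ d ∈ Dset, g m n ∈ C d)
    (hdisj : ∀ d ∈ Dset, ∀ d' ∈ Dset, ∀ w ∈ C d, w ∈ C d' → d = d')
    (hright : ∀ d ∈ Dset, ∀ m n, g m n ∈ C d → ∃ d', (d, d') ∈ H ∧ g (m + 1) n ∈ C d')
    (hup : ∀ d ∈ Dset, ∀ m n, g m n ∈ C d → ∃ d', (d, d') ∈ V ∧ g m (n + 1) ∈ C d') :
    ∃ t : ℕ → ℕ → ℕ, (∀ m n, t m n ∈ Dset) ∧ (∀ m n, (t m n, t (m + 1) n) ∈ H) ∧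
      (∀ m n, (t m n, t m (n + 1)) ∈ V) := by
  choose t htD hgt using hcover
  refine ⟨t, htD, fun m n => ?_, fun m n => ?_⟩
  · obtain ⟨d', hd', hmem⟩ := hright _ (htD m n) m n (hgt m n)
    rwa [hdisj _ (htD (m + 1) n) _ (hH _ hd') _ (hgt (m + 1) n) hmem]
  · obtain ⟨d', hd', hmem⟩ := hup _ (htD m n) m n (hgt m n)
    rwa [hdisj _ (htD m (n + 1)) _ (hV _ hd') _ (hgt m (n + 1)) hmem]

/-- The roles `X_{i+1}`, `Y_{j+1}`, `S_{(i+1)(j+1)}` are indexed by `i, j : Bool`; the cell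
concepts are `κ i j`, with `A, B, C, E = κ false false, κ true false, κ false true, κ true true`,
so that the cell `κ i j` has horizontal role `X_i`, vertical role `Y_j` and bound on `S_{ij}`. -/
inductive GridRole
  | x (i : Bool)
  | y (j : Bool)
  | s (i j : Bool)

section Reduction

variable (ν : GridRole → ℕ) (κ : Bool → Bool → ℕ) (cd : ℕ → ℕ) (Dset : Finset ℕ)
  (H V : Finset (ℕ × ℕ))

def gridRIA : List (Role × Role) :=
  [(.atom (ν (.x false)), .atom (ν (.s false false))),
   (.atom (ν (.y false)), .atom (ν (.s false false))),
   (.atom (ν (.x false)), .atom (ν (.s false true))),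
   (.atom (ν (.y true)), .atom (ν (.s false true))),
   (.atom (ν (.x true)), .atom (ν (.s true false))),
   (.atom (ν (.y false)), .atom (ν (.s true false))),
   (.atom (ν (.x true)), .atom (ν (.s true true))),
   (.atom (ν (.y true)), .atom (ν (.s true true)))]

def gridAxioms : Terminology :=
  let K i j := DLConcept.atom (κ i j)
  let X i := Role.atom (ν (.x i))
  let Y j := Role.atom (ν (.y j))
  let S i j := Role.atom (ν (.s i j))
  [(K false false, bigAnd [(K true false).neg, (K false true).neg, (K true true).neg,
      .ex (X false) (K true false), .ex (Y false) (K false true), .atmost 3 (S false false) .top]),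
   (K true false, bigAnd [(K false false).neg, (K false true).neg, (K true true).neg,
      .ex (X true) (K false false), .ex (Y false) (K true true), .atmost 3 (S true false) .top]),
   (K false true, bigAnd [(K false false).neg, (K true false).neg, (K true true).neg,
      .ex (X false) (K true true), .ex (Y true) (K false false), .atmost 3 (S false true) .top]),
   (K true true, bigAnd [(K false false).neg, (K true false).neg, (K false true).neg,
      .ex (X true) (K false true), .ex (Y true) (K true false), .atmost 3 (S true true) .top])]

noncomputable def tilingAxioms : Terminology :=
  [(bigOr [.atom (κ false false), .atom (κ true false), .atom (κ false true), .atom (κ true true)],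
    bigOr (Dset.toList.map (fun d => DLConcept.atom (cd d))))]

noncomputable def disjointnessAxioms : Terminology :=
  Dset.toList.flatMap (fun d =>
    (Dset.toList.filter (fun d' => d' ≠ d)).map (fun d' =>
      (DLConcept.atom (cd d), DLConcept.neg (DLConcept.atom (cd d')))))

noncomputable def successorTiles (R : Finset (ℕ × ℕ)) (d : ℕ) : DLConcept :=
  bigOr ((R.toList.filter (fun p => p.1 = d)).map (fun p => DLConcept.atom (cd p.2)))

noncomputable def compatibilityAxioms : Terminology :=
  Dset.toList.map (fun d =>
    (DLConcept.atom (cd d),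
      bigAnd [.all (.atom (ν (.x false))) (successorTiles cd H d),
        .all (.atom (ν (.x true))) (successorTiles cd H d),
        .all (.atom (ν (.y false))) (successorTiles cd V d),
        .all (.atom (ν (.y true))) (successorTiles cd V d)]))

variable {ν κ cd Dset H V}

lemma modelsRH_gridRIA_iff {I : Interp} : I.ModelsRH (gridRIA ν) ↔
    ∀ i j, I.rI (ν (.x i)) ≤ I.rI (ν (.s i j)) ∧ I.rI (ν (.y j)) ≤ I.rI (ν (.s i j)) := by
  simp only [Interp.modelsRH_iff, gridRIA, List.forall_mem_cons, List.not_mem_nil,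
    IsEmpty.forall_iff, implies_true, and_true, Bool.forall_bool, Interp.rSem]
  tauto

lemma modelsT_gridAxioms_iff {I : Interp} : I.ModelsT (gridAxioms ν κ) ↔
    ∀ i j, ∀ w ∈ I.cI (κ i j),
      (∀ i' j', w ∈ I.cI (κ i' j') → i = i' ∧ j = j') ∧
      (∃ u, I.rI (ν (.x i)) w u ∧ u ∈ I.cI (κ (!i) j)) ∧
      (∃ v, I.rI (ν (.y j)) w v ∧ v ∈ I.cI (κ i (!j))) ∧
      Cardinal.mk {u // I.rI (ν (.s i j)) w u} ≤ 3 := by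
  simp only [Interp.ModelsT, gridAxioms, List.mem_cons, List.not_mem_nil, or_false,
    Set.subset_def, forall_eq_or_imp, Interp.cSem, mem_cSem_bigAnd, Set.mem_compl_iff,
    Interp.rSem, Set.mem_ofPred_eq, forall_eq, Set.mem_univ, and_true, Nat.cast_ofNat,
    Bool.forall_bool, Bool.false_eq_true, and_false, imp_false, Bool.not_false,
    Bool.true_eq_false, Bool.not_true, implies_true, true_and]
  aesop

lemma modelsT_tilingAxioms_iff {I : Interp} : I.ModelsT (tilingAxioms κ cd Dset) ↔
    ∀ i j, ∀ w ∈ I.cI (κ i j), ∃ d ∈ Dset, w ∈ I.cI (cd d) := by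
  simp only [Interp.ModelsT, tilingAxioms, List.mem_cons, List.not_mem_nil, or_false,
    Set.subset_def, forall_eq, mem_cSem_bigOr, exists_eq_or_imp, Interp.cSem, List.mem_map,
    Finset.mem_toList, exists_exists_and_eq_and, Bool.forall_bool]
  aesop

lemma modelsT_disjointnessAxioms_iff {I : Interp} : I.ModelsT (disjointnessAxioms cd Dset) ↔
    ∀ d ∈ Dset, ∀ d' ∈ Dset, ∀ w ∈ I.cI (cd d), w ∈ I.cI (cd d') → d = d' := by
  simp only [Interp.ModelsT, disjointnessAxioms, List.mem_flatMap, List.mem_map,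
    List.mem_filter, Finset.mem_toList, decide_eq_true_eq]
  constructor
  · intro h d hd d' hd' w hw hw'
    by_contra hne
    exact h _ ⟨d, hd, d', ⟨hd', Ne.symm hne⟩, rfl⟩ hw hw'
  · rintro h _ ⟨d, hd, d', ⟨hd', hne⟩, rfl⟩ w hw hw'
    exact hne (h d hd d' hd' w hw hw').symm

lemma mem_cSem_successorTiles {I : Interp} {R : Finset (ℕ × ℕ)} {d : ℕ} {w : I.Dom} :
    w ∈ I.cSem (successorTiles cd R d) ↔ ∃ d', (d, d') ∈ R ∧ w ∈ I.cI (cd d') := by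
  simp [successorTiles, Interp.cSem]

lemma modelsT_compatibilityAxioms_iff {I : Interp} :
    I.ModelsT (compatibilityAxioms ν cd Dset H V) ↔ ∀ d ∈ Dset, ∀ w ∈ I.cI (cd d),
      (∀ i u, I.rI (ν (.x i)) w u → ∃ d', (d, d') ∈ H ∧ u ∈ I.cI (cd d')) ∧
      (∀ j v, I.rI (ν (.y j)) w v → ∃ d', (d, d') ∈ V ∧ v ∈ I.cI (cd d')) := by
  simp [Interp.ModelsT, compatibilityAxioms, Set.subset_def, Interp.cSem, Interp.rSem,
    mem_cSem_successorTiles, Bool.forall_bool, and_assoc]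

theorem gridFrame_of_models {Rp : Set ℕ} (hRp : ∀ i j, ν (.s i j) ∈ Rp) {I : Interp}
    (hgood : I.Good Rp) (hRH : I.ModelsRH (gridRIA ν)) (hT : I.ModelsT (gridAxioms ν κ)) :
    GridFrame (fun i j => I.cI (κ i j)) (fun i => I.rI (ν (.x i))) (fun j => I.rI (ν (.y j)))
      (fun i j => I.rI (ν (.s i j))) := by
  have hcell := modelsT_gridAxioms_iff.1 hT
  have hsub := modelsRH_gridRIA_iff.1 hRH
  exact
    { eq_of_mem := fun hw hw' => ((hcell _ _ _ hw).1 _ _ hw')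
      exists_x := fun hw => (hcell _ _ _ hw).2.1
      exists_y := fun hw => (hcell _ _ _ hw).2.2.1
      x_le := fun i j => (hsub i j).1
      y_le := fun i j => (hsub i j).2
      transitive := fun i j => hgood _ (hRp i j)
      card_le := fun hw => (hcell _ _ _ hw).2.2.2 }

theorem exists_tiling_of_satisfiableT {Rp : Set ℕ} (hRp : ∀ i j, ν (.s i j) ∈ Rp)
    (hH : ∀ p ∈ H, p.2 ∈ Dset) (hV : ∀ p ∈ V, p.2 ∈ Dset)
    (h : SatisfiableT Rp (gridRIA ν) (gridAxioms ν κ ++ tilingAxioms κ cd Dset ++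
      disjointnessAxioms cd Dset ++ compatibilityAxioms ν cd Dset H V) (.atom (κ false false))) :
    ∃ t : ℕ → ℕ → ℕ, (∀ m n, t m n ∈ Dset) ∧ (∀ m n, (t m n, t (m + 1) n) ∈ H) ∧
      (∀ m n, (t m n, t m (n + 1)) ∈ V) := by
  obtain ⟨I, hgood, hRH, hT, w, hw⟩ := h
  simp only [Interp.modelsT_append] at hT
  obtain ⟨⟨⟨hgrid, htiling⟩, hdisj⟩, hcompat⟩ := hT
  obtain ⟨g, hg⟩ := (gridFrame_of_models hRp hgood hRH hgrid).exists_grid hw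
  have htile := modelsT_tilingAxioms_iff.1 htiling
  have hnext := modelsT_compatibilityAxioms_iff.1 hcompat
  exact exists_tiling_of_grid hH hV (fun m n => htile _ _ _ (hg m n).1)
    (modelsT_disjointnessAxioms_iff.1 hdisj)
    (fun d hd m n hmn => (hnext d hd _ hmn).1 _ _ (hg m n).2.1)
    (fun d hd m n hmn => (hnext d hd _ hmn).2 _ _ (hg m n).2.2)

end Reduction

def StayOrStep (i : Bool) (m m' : ℕ) : Prop :=
  m' = m ∨ m.bodd = i ∧ m' = m + 1

lemma StayOrStep.le {i : Bool} {m m' : ℕ} (h : StayOrStep i m m') : m ≤ m' := by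
  rcases h with rfl | ⟨-, rfl⟩ <;> omega

/-- Two consecutive steps would start from numbers of the same parity `i`. -/
lemma stayOrStep_transitive (i : Bool) : Transitive (StayOrStep i) := by
  rintro m m' m'' (rfl | ⟨hm, rfl⟩) (rfl | ⟨hm', rfl⟩)
  · exact .inl rfl
  · exact .inr ⟨hm', rfl⟩
  · exact .inr ⟨hm, rfl⟩
  · simp [Nat.bodd_succ, hm] at hm'

/-- On a point of cell `(i, j)`, i.e. with coordinates of parities `i` and `j`, the relation of
`S_{ij}` reaches exactly the three other points of its `2 × 2` block. -/
def GridRole.rel : GridRole → ℕ × ℕ → ℕ × ℕ → Prop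
  | .x i, p, q => p.1.bodd = i ∧ q = (p.1 + 1, p.2)
  | .y j, p, q => p.2.bodd = j ∧ q = (p.1, p.2 + 1)
  | .s i j, p, q => StayOrStep i p.1 q.1 ∧ StayOrStep j p.2 q.2 ∧ p ≠ q

lemma GridRole.rel_transitive (ρ : GridRole) : Transitive ρ.rel := by
  rcases ρ with i | j | ⟨i, j⟩
  · rintro p q r ⟨hp, rfl⟩ ⟨hq, -⟩
    simp [Nat.bodd_succ, hp] at hq
  · rintro p q r ⟨hp, rfl⟩ ⟨hq, -⟩
    simp [Nat.bodd_succ, hp] at hq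
  · rintro p q r ⟨hpq₁, hpq₂, hpq⟩ ⟨hqr₁, hqr₂, -⟩
    refine ⟨stayOrStep_transitive i hpq₁ hqr₁, stayOrStep_transitive j hpq₂ hqr₂, ?_⟩
    rintro rfl
    have := hpq₁.le; have := hqr₁.le; have := hpq₂.le; have := hqr₂.le
    exact hpq (Prod.ext (by omega) (by omega))

lemma GridRole.x_rel_le (i j : Bool) : (GridRole.x i).rel ≤ (GridRole.s i j).rel := by
  rintro p _ ⟨hp, rfl⟩
  exact ⟨.inr ⟨hp, rfl⟩, .inl rfl, by simp [Prod.ext_iff]⟩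

lemma GridRole.y_rel_le (i j : Bool) : (GridRole.y j).rel ≤ (GridRole.s i j).rel := by
  rintro p _ ⟨hp, rfl⟩
  exact ⟨.inl rfl, .inr ⟨hp, rfl⟩, by simp [Prod.ext_iff]⟩

lemma GridRole.card_s_rel_le (i j : Bool) (p : ℕ × ℕ) :
    Cardinal.mk {q // (GridRole.s i j).rel p q} ≤ 3 := by
  classical
  let block : Finset (ℕ × ℕ) := {(p.1 + 1, p.2), (p.1, p.2 + 1), (p.1 + 1, p.2 + 1)}
  have hsub : {q | (GridRole.s i j).rel p q} ⊆ ↑block := by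
    rintro ⟨q₁, q₂⟩ ⟨h₁ | ⟨-, h₁⟩, h₂ | ⟨-, h₂⟩, hne⟩ <;>
      simp_all [block]
  calc Cardinal.mk {q // (GridRole.s i j).rel p q}
      ≤ Cardinal.mk (block : Set (ℕ × ℕ)) := Cardinal.mk_le_mk_of_subset hsub
    _ = block.card := Cardinal.mk_coe_finset
    _ ≤ 3 := by exact_mod_cast Finset.card_le_three

def tilingInterp (ν : GridRole → ℕ) (κ : Bool → Bool → ℕ) (cd : ℕ → ℕ) (t : ℕ → ℕ → ℕ) :
    Interp where
  Dom := ℕ × ℕ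
  dom_nonempty := ⟨(0, 0)⟩
  cI k := {p | k = κ p.1.bodd p.2.bodd ∨ k = cd (t p.1 p.2)}
  rI k p q := ∃ ρ, ν ρ = k ∧ ρ.rel p q

section TilingInterp

variable {ν : GridRole → ℕ} {κ : Bool → Bool → ℕ} {cd : ℕ → ℕ} {t : ℕ → ℕ → ℕ}
  {Dset : Finset ℕ} {H V : Finset (ℕ × ℕ)}

lemma tilingInterp_rI (hν : Function.Injective ν) (ρ : GridRole) :
    (tilingInterp ν κ cd t).rI (ν ρ) = ρ.rel := by
  ext p q
  exact ⟨fun ⟨ρ', hρ', h⟩ => hν hρ' ▸ h, fun h => ⟨ρ, rfl, h⟩⟩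

lemma tilingInterp_good (hν : Function.Injective ν) (Rp : Set ℕ) :
    (tilingInterp ν κ cd t).Good Rp := by
  rintro - - p q r ⟨ρ, rfl, hpq⟩ ⟨ρ', hρ', hqr⟩
  exact ⟨ρ, rfl, ρ.rel_transitive hpq (hν hρ' ▸ hqr)⟩

lemma mem_tilingInterp_cell (hκ : Function.Injective (Function.uncurry κ))
    (hfresh : ∀ d ∈ Dset, ∀ i j, cd d ≠ κ i j) (htD : ∀ m n, t m n ∈ Dset)
    {i j : Bool} {p : ℕ × ℕ} :
    p ∈ (tilingInterp ν κ cd t).cI (κ i j) ↔ p.1.bodd = i ∧ p.2.bodd = j := by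
  have hcell : κ i j = κ p.1.bodd p.2.bodd ↔ i = p.1.bodd ∧ j = p.2.bodd := by
    simpa using hκ.eq_iff (a := (i, j)) (b := (p.1.bodd, p.2.bodd))
  change κ i j = κ p.1.bodd p.2.bodd ∨ κ i j = cd (t p.1 p.2) ↔ _
  rw [or_iff_left (hfresh _ (htD p.1 p.2) i j).symm, hcell, eq_comm, eq_comm (a := j)]

lemma mem_tilingInterp_tile (hcd : Set.InjOn cd Dset)
    (hfresh : ∀ d ∈ Dset, ∀ i j, cd d ≠ κ i j) (htD : ∀ m n, t m n ∈ Dset)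
    {d : ℕ} (hd : d ∈ Dset) {p : ℕ × ℕ} :
    p ∈ (tilingInterp ν κ cd t).cI (cd d) ↔ t p.1 p.2 = d := by
  change cd d = κ p.1.bodd p.2.bodd ∨ cd d = cd (t p.1 p.2) ↔ _
  rw [or_iff_right (hfresh d hd _ _)]
  exact ⟨fun h => (hcd hd (htD p.1 p.2) h).symm, fun h => h ▸ rfl⟩

lemma tilingInterp_modelsRH (hν : Function.Injective ν) :
    (tilingInterp ν κ cd t).ModelsRH (gridRIA ν) :=
  modelsRH_gridRIA_iff.2 fun i j => by
    simp only [tilingInterp_rI hν]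
    exact ⟨GridRole.x_rel_le i j, GridRole.y_rel_le i j⟩

lemma tilingInterp_modelsT (hν : Function.Injective ν)
    (hκ : Function.Injective (Function.uncurry κ)) (hcd : Set.InjOn cd Dset)
    (hfresh : ∀ d ∈ Dset, ∀ i j, cd d ≠ κ i j) (htD : ∀ m n, t m n ∈ Dset)
    (htH : ∀ m n, (t m n, t (m + 1) n) ∈ H) (htV : ∀ m n, (t m n, t m (n + 1)) ∈ V) :
    (tilingInterp ν κ cd t).ModelsT (gridAxioms ν κ ++ tilingAxioms κ cd Dset ++
      disjointnessAxioms cd Dset ++ compatibilityAxioms ν cd Dset H V) := by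
  have hcell := @mem_tilingInterp_cell ν κ cd t Dset hκ hfresh htD
  have htile := @mem_tilingInterp_tile ν κ cd t Dset hcd hfresh htD
  simp only [Interp.modelsT_append, modelsT_gridAxioms_iff, modelsT_tilingAxioms_iff,
    modelsT_disjointnessAxioms_iff, modelsT_compatibilityAxioms_iff, tilingInterp_rI hν]
  refine ⟨⟨⟨?grid, ?tiling⟩, ?disjoint⟩, ?compatible⟩
  case grid =>
    rintro i j p hp
    obtain ⟨rfl, rfl⟩ := hcell.1 hp
    refine ⟨fun i' j' h => ?_, ⟨_, ⟨rfl, rfl⟩, ?_⟩, ⟨_, ⟨rfl, rfl⟩, ?_⟩,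
      GridRole.card_s_rel_le _ _ p⟩
    · obtain ⟨rfl, rfl⟩ := hcell.1 h
      exact ⟨rfl, rfl⟩
    · exact hcell.2 ⟨Nat.bodd_succ _, rfl⟩
    · exact hcell.2 ⟨rfl, Nat.bodd_succ _⟩
  case tiling => exact fun _ _ p _ => ⟨t p.1 p.2, htD _ _, (htile (htD _ _)).2 rfl⟩
  case disjoint =>
    intro d hd d' hd' p hp hp'
    exact ((htile hd).1 hp).symm.trans ((htile hd').1 hp')
  case compatible =>
    intro d hd p hp
    obtain rfl := (htile hd).1 hp
    refine ⟨?_, ?_⟩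
    · rintro i _ ⟨-, rfl⟩
      exact ⟨_, htH _ _, (htile (htD _ _)).2 rfl⟩
    · rintro j _ ⟨-, rfl⟩
      exact ⟨_, htV _ _, (htile (htD _ _)).2 rfl⟩

theorem satisfiableT_of_tiling (Rp : Set ℕ) (hν : Function.Injective ν)
    (hκ : Function.Injective (Function.uncurry κ)) (hcd : Set.InjOn cd Dset)
    (hfresh : ∀ d ∈ Dset, ∀ i j, cd d ≠ κ i j) (htD : ∀ m n, t m n ∈ Dset)
    (htH : ∀ m n, (t m n, t (m + 1) n) ∈ H) (htV : ∀ m n, (t m n, t m (n + 1)) ∈ V) :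
    SatisfiableT Rp (gridRIA ν) (gridAxioms ν κ ++ tilingAxioms κ cd Dset ++
      disjointnessAxioms cd Dset ++ compatibilityAxioms ν cd Dset H V) (.atom (κ false false)) :=
  ⟨tilingInterp ν κ cd t, tilingInterp_good hν Rp, tilingInterp_modelsRH hν,
    tilingInterp_modelsT hν hκ hcd hfresh htD htH htV,
    (0, 0), (mem_tilingInterp_cell hκ hfresh htD).2 ⟨rfl, rfl⟩⟩

end TilingInterp

def roleName (x1 x2 y1 y2 s11 s12 s21 s22 : ℕ) : GridRole → ℕ
  | .x false => x1
  | .x true => x2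
  | .y false => y1
  | .y true => y2
  | .s false false => s11
  | .s false true => s12
  | .s true false => s21
  | .s true true => s22

def cellName (a b c e : ℕ) : Bool → Bool → ℕ
  | false, false => a
  | true, false => b
  | false, true => c
  | true, true => e

lemma roleName_injective {x1 x2 y1 y2 s11 s12 s21 s22 : ℕ}
    (h : [x1, x2, y1, y2, s11, s12, s21, s22].Nodup) :
    Function.Injective (roleName x1 x2 y1 y2 s11 s12 s21 s22) := by
  let roles := [GridRole.x false, .x true, .y false, .y true,
    .s false false, .s false true, .s true false, .s true true]
  have hall : ∀ ρ, ρ ∈ roles := by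
    rintro (⟨_ | _⟩ | ⟨_ | _⟩ | ⟨_ | _, _ | _⟩) <;> simp [roles]
  exact fun ρ ρ' => List.inj_on_of_nodup_map (f := roleName x1 x2 y1 y2 s11 s12 s21 s22)
    (l := roles) h (hall ρ) (hall ρ')

lemma cellName_injective {a b c e : ℕ} (h : [a, b, c, e].Nodup) :
    Function.Injective (Function.uncurry (cellName a b c e)) := by
  let cells := [(false, false), (true, false), (false, true), (true, true)]
  have hall : ∀ ij, ij ∈ cells := by
    rintro ⟨_ | _, _ | _⟩ <;> simp [cells]
  exact fun ij ij' => List.inj_on_of_nodup_map (f := Function.uncurry (cellName a b c e))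
    (l := cells) h (hall ij) (hall ij')

lemma ne_cellName_of_not_mem {a b c e n : ℕ} (h : n ∉ [a, b, c, e]) (i j : Bool) :
    n ≠ cellName a b c e i j := by
  rintro rfl
  cases i <;> cases j <;> simp [cellName] at h

theorem domino_reduction_general (Rp : Set ℕ)
    (x1 x2 y1 y2 s11 s12 s21 s22 : ℕ)
    (hs11 : s11 ∈ Rp) (hs12 : s12 ∈ Rp) (hs21 : s21 ∈ Rp) (hs22 : s22 ∈ Rp)
    (hroles : [x1, x2, y1, y2, s11, s12, s21, s22].Nodup)
    (a b c e : ℕ) (hc : [a, b, c, e].Nodup)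
    (cd : ℕ → ℕ)
    (Dset : Finset ℕ)
    (hcd : Set.InjOn cd ↑Dset)
    (hfresh : ∀ d ∈ Dset, cd d ∉ [a, b, c, e])
    (H V : Finset (ℕ × ℕ))
    (hH : ∀ p ∈ H, p.1 ∈ Dset ∧ p.2 ∈ Dset)
    (hV : ∀ p ∈ V, p.1 ∈ Dset ∧ p.2 ∈ Dset) :
    let X1 := Role.atom x1; let X2 := Role.atom x2
    let Y1 := Role.atom y1; let Y2 := Role.atom y2
    let S11 := Role.atom s11; let S12 := Role.atom s12
    let S21 := Role.atom s21; let S22 := Role.atom s22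
    let CA := DLConcept.atom a; let CB := DLConcept.atom b
    let CC := DLConcept.atom c; let CE := DLConcept.atom e
    let RIA : List (Role × Role) :=
      [(X1, S11), (Y1, S11), (X1, S12), (Y2, S12),
       (X2, S21), (Y1, S21), (X2, S22), (Y2, S22)]
    let gridAx : Terminology :=
      [(CA, bigAnd [CB.neg, CC.neg, CE.neg, DLConcept.ex X1 CB, DLConcept.ex Y1 CC,
                    DLConcept.atmost 3 S11 DLConcept.top]),
       (CB, bigAnd [CA.neg, CC.neg, CE.neg, DLConcept.ex X2 CA, DLConcept.ex Y1 CE,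
                    DLConcept.atmost 3 S21 DLConcept.top]),
       (CC, bigAnd [CA.neg, CB.neg, CE.neg, DLConcept.ex X1 CE, DLConcept.ex Y2 CA,
                    DLConcept.atmost 3 S12 DLConcept.top]),
       (CE, bigAnd [CA.neg, CB.neg, CC.neg, DLConcept.ex X2 CC, DLConcept.ex Y2 CB,
                    DLConcept.atmost 3 S22 DLConcept.top])]
    let tilingAx : Terminology :=
      [(bigOr [CA, CB, CC, CE],
        bigOr (Dset.toList.map (fun d => DLConcept.atom (cd d))))]
    let disjAx : Terminology :=
      Dset.toList.flatMap (fun d =>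
        (Dset.toList.filter (fun d' => d' ≠ d)).map (fun d' =>
          (DLConcept.atom (cd d), DLConcept.neg (DLConcept.atom (cd d')))))
    let compatAx : Terminology :=
      Dset.toList.map (fun d =>
        (DLConcept.atom (cd d),
          bigAnd
            [DLConcept.all X1 (bigOr ((H.toList.filter
                (fun p => p.1 = d)).map (fun p => DLConcept.atom (cd p.2)))),
             DLConcept.all X2 (bigOr ((H.toList.filter
                (fun p => p.1 = d)).map (fun p => DLConcept.atom (cd p.2)))),
             DLConcept.all Y1 (bigOr ((V.toList.filter
                (fun p => p.1 = d)).map (fun p => DLConcept.atom (cd p.2)))),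
             DLConcept.all Y2 (bigOr ((V.toList.filter
                (fun p => p.1 = d)).map (fun p => DLConcept.atom (cd p.2))))]))
    let T : Terminology := gridAx ++ tilingAx ++ disjAx ++ compatAx
    (SatisfiableT Rp RIA T CA ↔
      ∃ t : ℕ → ℕ → ℕ,
        (∀ m n, t m n ∈ Dset) ∧
        (∀ m n, (t m n, t (m + 1) n) ∈ H) ∧
        (∀ m n, (t m n, t m (n + 1)) ∈ V)) := by
  intro X1 X2 Y1 Y2 S11 S12 S21 S22 CA CB CC CE RIA gridAx tilingAx disjAx compatAx T
  have hRp : ∀ i j, roleName x1 x2 y1 y2 s11 s12 s21 s22 (.s i j) ∈ Rp := by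
    rintro (_ | _) (_ | _) <;> assumption
  exact ⟨exists_tiling_of_satisfiableT (κ := cellName a b c e) hRp (fun p hp => (hH p hp).2)
      (fun p hp => (hV p hp).2),
    fun ⟨t, htD, htH, htV⟩ => satisfiableT_of_tiling Rp (roleName_injective hroles)
      (cellName_injective hc) hcd (fun d hd => ne_cellName_of_not_mem (hfresh d hd)) htD htH htV⟩

/-- **Reduction of the domino problem to SHIN⁺.** Let
`(Dset, H, V)` be a domino system.  With the role hierarchy generated by
`Xᵢ ⊑ S_{ij}`, `Yⱼ ⊑ S_{ij}` (the `S_{ij}` transitive, the `Xᵢ`, `Yⱼ` not), and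
the terminology consisting of the grid axioms (with the unqualified number
restrictions `(≤ 3 S_{ij})`), the tiling axioms and the local compatibility
axioms, the concept `A` is satisfiable w.r.t. the terminology and the role
hierarchy iff the domino system admits a tiling of `ℕ × ℕ`. -/
theorem domino_reduction (Rp : Set ℕ)
    (x1 x2 y1 y2 s11 s12 s21 s22 : ℕ)
    (hs11 : s11 ∈ Rp) (hs12 : s12 ∈ Rp) (hs21 : s21 ∈ Rp) (hs22 : s22 ∈ Rp)
    (hx1 : x1 ∉ Rp) (hx2 : x2 ∉ Rp) (hy1 : y1 ∉ Rp) (hy2 : y2 ∉ Rp)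
    (hroles : [x1, x2, y1, y2, s11, s12, s21, s22].Nodup)
    (a b c e : ℕ) (hc : [a, b, c, e].Nodup)
    (cd : ℕ → ℕ)
    (Dset : Finset ℕ) (hD : Dset.Nonempty)
    (hcd : Set.InjOn cd ↑Dset)
    (hfresh : ∀ d ∈ Dset, cd d ∉ [a, b, c, e])
    (H V : Finset (ℕ × ℕ))
    (hH : ∀ p ∈ H, p.1 ∈ Dset ∧ p.2 ∈ Dset)
    (hV : ∀ p ∈ V, p.1 ∈ Dset ∧ p.2 ∈ Dset) :
    let X1 := Role.atom x1; let X2 := Role.atom x2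
    let Y1 := Role.atom y1; let Y2 := Role.atom y2
    let S11 := Role.atom s11; let S12 := Role.atom s12
    let S21 := Role.atom s21; let S22 := Role.atom s22
    let CA := DLConcept.atom a; let CB := DLConcept.atom b
    let CC := DLConcept.atom c; let CE := DLConcept.atom e
    let RIA : List (Role × Role) :=
      [(X1, S11), (Y1, S11), (X1, S12), (Y2, S12),
       (X2, S21), (Y1, S21), (X2, S22), (Y2, S22)]
    let gridAx : Terminology :=
      [(CA, bigAnd [CB.neg, CC.neg, CE.neg, DLConcept.ex X1 CB, DLConcept.ex Y1 CC,
                    DLConcept.atmost 3 S11 DLConcept.top]),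
       (CB, bigAnd [CA.neg, CC.neg, CE.neg, DLConcept.ex X2 CA, DLConcept.ex Y1 CE,
                    DLConcept.atmost 3 S21 DLConcept.top]),
       (CC, bigAnd [CA.neg, CB.neg, CE.neg, DLConcept.ex X1 CE, DLConcept.ex Y2 CA,
                    DLConcept.atmost 3 S12 DLConcept.top]),
       (CE, bigAnd [CA.neg, CB.neg, CC.neg, DLConcept.ex X2 CC, DLConcept.ex Y2 CB,
                    DLConcept.atmost 3 S22 DLConcept.top])]
    let tilingAx : Terminology :=
      [(bigOr [CA, CB, CC, CE],
        bigOr (Dset.toList.map (fun d => DLConcept.atom (cd d))))]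
    let disjAx : Terminology :=
      Dset.toList.flatMap (fun d =>
        (Dset.toList.filter (fun d' => d' ≠ d)).map (fun d' =>
          (DLConcept.atom (cd d), DLConcept.neg (DLConcept.atom (cd d')))))
    let compatAx : Terminology :=
      Dset.toList.map (fun d =>
        (DLConcept.atom (cd d),
          bigAnd
            [DLConcept.all X1 (bigOr ((H.toList.filter
                (fun p => p.1 = d)).map (fun p => DLConcept.atom (cd p.2)))),
             DLConcept.all X2 (bigOr ((H.toList.filter
                (fun p => p.1 = d)).map (fun p => DLConcept.atom (cd p.2)))),
             DLConcept.all Y1 (bigOr ((V.toList.filter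
                (fun p => p.1 = d)).map (fun p => DLConcept.atom (cd p.2)))),
             DLConcept.all Y2 (bigOr ((V.toList.filter
                (fun p => p.1 = d)).map (fun p => DLConcept.atom (cd p.2))))]))
    let T : Terminology := gridAx ++ tilingAx ++ disjAx ++ compatAx
    (SatisfiableT Rp RIA T CA ↔
      ∃ t : ℕ → ℕ → ℕ,
        (∀ m n, t m n ∈ Dset) ∧
        (∀ m n, (t m n, t (m + 1) n) ∈ H) ∧
        (∀ m n, (t m n, t m (n + 1)) ∈ V)) :=
  domino_reduction_general Rp x1 x2 y1 y2 s11 s12 s21 s22 hs11 hs12 hs21 hs22 hroles a b c e hc cd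
    Dset hcd hfresh H V hH hV
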